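/- There exists an absolute constant C > 0 such that for every P > 0, every d > 0, every t > 0 and every x ∈ ℝ, the series Σ_{k∈ℤ, k≠0} e^{2πikx/P} e^{−d(2πk/P)² t} / (2πik) converges absolutely and satisfies |Σ_{k∈ℤ, k≠0} e^{2πikx/P} e^{−d(2πk/P)² t} / (2πik)| ≤ C. (This is the uniform-in-period, uniform-in-time L^∞ bound on the P-periodic Fourier series of the error-function-type convolution kernel arising in the critical part of the linear solution operator, with P = NT.) -/

import Mathlib

/-!
With `u = x / P` and `a = d (2π / P)² t`, the series is `F(u) = ∑_{k ≠ 0} e^{2πiku} e^{-ak²} / (2πik)`,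
the sawtooth `∑_{k ≠ 0} e^{2πiku} / (2πik)` smoothed by the heat flow. Termwise, `F' = θ - 1` with
`θ(u) = ∑_k e^{2πiku} e^{-ak²}`, and Poisson summation (Jacobi's identity) turns `θ` into the
periodized Gaussian `√(π/a) ∑_n e^{-π²(n-u)²/a} ≥ 0`. Hence `F` is real, `F(u) + u` is nondecreasing,
and since `F` is odd and `1`-periodic, `F(0) = F(1) = 0`. So `-u ≤ F(u) ≤ 1 - u` on `[0, 1]`, and
`|F| ≤ 1` everywhere.
-/

/-- The `k`-th term `e^{2πikx/P} e^{-d(2πk/P)²t} / (2πik)` (zero for `k = 0`) of the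
`P`-periodic Fourier series of the error-function-type convolution kernel. -/
noncomputable def kernTerm (P d t x : ℝ) (k : ℤ) : ℂ :=
  if k = 0 then 0
  else
    Complex.exp (2 * (Real.pi : ℂ) * Complex.I * (k : ℂ) * (x : ℂ) / (P : ℂ)) *
      ((Real.exp (-(d * (2 * Real.pi * (k : ℝ) / P) ^ 2 * t)) : ℝ) : ℂ) /
        (2 * (Real.pi : ℂ) * Complex.I * (k : ℂ))

open Complex
open scoped Real

noncomputable def heatThetaTerm (a u : ℝ) (k : ℤ) : ℂ :=
  cexp (2 * π * I * k * u) * (Real.exp (-(a * k ^ 2)) : ℂ)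

noncomputable def sawtoothTerm (a u : ℝ) (k : ℤ) : ℂ :=
  if k = 0 then 0 else heatThetaTerm a u k / (2 * π * I * k)

noncomputable def heatSawtooth (a u : ℝ) : ℂ := ∑' k : ℤ, sawtoothTerm a u k

noncomputable def periodizedGaussian (a u : ℝ) : ℝ :=
  √(π / a) * ∑' n : ℤ, Real.exp (-(π ^ 2 / a) * (n - u) ^ 2)
theorem summable_exp_neg_mul_int_sq {a : ℝ} (ha : 0 < a) :
    Summable fun k : ℤ => Real.exp (-(a * k ^ 2)) := by
  have := summable_pow_mul_jacobiTheta₂_term_bound 0 (div_pos ha Real.pi_pos) 0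
  refine this.congr fun k => ?_
  field_simp
  simp

theorem norm_heatThetaTerm (a u : ℝ) (k : ℤ) :
    ‖heatThetaTerm a u k‖ = Real.exp (-(a * k ^ 2)) := by
  rw [heatThetaTerm, norm_mul, norm_exp, norm_real, Real.norm_of_nonneg (Real.exp_pos _).le]
  simp

theorem heatThetaTerm_zero (a u : ℝ) : heatThetaTerm a u 0 = 1 := by
  simp [heatThetaTerm]

theorem norm_sawtoothTerm_le (a u : ℝ) (k : ℤ) :
    ‖sawtoothTerm a u k‖ ≤ Real.exp (-(a * k ^ 2)) := by
  unfold sawtoothTerm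
  split_ifs with hk
  · simpa using (Real.exp_pos _).le
  · have h1 : (1 : ℝ) ≤ ‖2 * π * I * k‖ := by
      have : (1 : ℝ) ≤ |(k : ℝ)| := by exact_mod_cast Int.one_le_abs hk
      simp only [norm_mul, norm_ofNat, norm_real, Real.norm_of_nonneg Real.pi_pos.le, norm_I,
        norm_intCast]
      nlinarith [Real.pi_gt_three]
    rw [norm_div, norm_heatThetaTerm]
    exact div_le_self (Real.exp_pos _).le h1

theorem summable_norm_sawtoothTerm {a : ℝ} (ha : 0 < a) (u : ℝ) :
    Summable fun k => ‖sawtoothTerm a u k‖ :=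
  (summable_exp_neg_mul_int_sq ha).of_nonneg_of_le (fun _ => norm_nonneg _)
    (norm_sawtoothTerm_le a u)

theorem hasDerivAt_sawtoothTerm (a u : ℝ) (k : ℤ) :
    HasDerivAt (sawtoothTerm a · k) (if k = 0 then 0 else heatThetaTerm a u k) u := by
  unfold sawtoothTerm
  split_ifs with hk
  · exact hasDerivAt_const u 0
  · have hc : (2 * π * I * k : ℂ) ≠ 0 := by simp [hk, Real.pi_ne_zero]
    have h := (((hasDerivAt_id (u : ℂ)).const_mul (2 * π * I * k)).cexp.mul_const
      (Real.exp (-(a * k ^ 2)) : ℂ)).div_const (2 * π * I * k) |>.comp_ofReal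
    convert h using 1
    · rfl
    · simp only [heatThetaTerm, id_eq, mul_one]
      field_simp

theorem sawtoothTerm_add_one (a u : ℝ) (k : ℤ) : sawtoothTerm a (u + 1) k = sawtoothTerm a u k := by
  simp only [sawtoothTerm, heatThetaTerm]
  congr 3
  push_cast
  rw [mul_add, mul_one, exp_add, show 2 * π * I * k = k * (2 * π * I) by ring,
    exp_int_mul_two_pi_mul_I, mul_one]

theorem sawtoothTerm_neg_neg (a u : ℝ) (k : ℤ) :
    sawtoothTerm a (-u) (-k) = -sawtoothTerm a u k := by
  by_cases hk : k = 0
  · simp [sawtoothTerm, hk]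
  · simp only [sawtoothTerm, heatThetaTerm, neg_eq_zero, hk, if_false]
    push_cast
    ring_nf

theorem tsum_heatThetaTerm {a : ℝ} (ha : 0 < a) (u : ℝ) :
    ∑' k : ℤ, heatThetaTerm a u k = periodizedGaussian a u := by
  have hs : 0 < ((a / π : ℝ) : ℂ).re := by simpa using div_pos ha Real.pi_pos
  have jacobi := tsum_exp_neg_quadratic hs (I * u)
  have hlhs : ∀ k : ℤ, heatThetaTerm a u k =
      cexp (-π * ((a / π : ℝ) : ℂ) * k ^ 2 + 2 * π * (I * u) * k) := by
    intro k
    rw [heatThetaTerm, ofReal_exp, ← exp_add]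
    congr 1
    push_cast
    field_simp
    ring
  have hrhs : ∀ n : ℤ, cexp (-π / ((a / π : ℝ) : ℂ) * (n + I * (I * u)) ^ 2) =
      (Real.exp (-(π ^ 2 / a) * (n - u) ^ 2) : ℂ) := by
    intro n
    rw [ofReal_exp, ← mul_assoc, I_mul_I]
    congr 1
    push_cast
    field_simp
    ring
  have hroot : ((a / π : ℝ) : ℂ) ^ (1 / 2 : ℂ) = (√(a / π) : ℂ) := by
    rw [Real.sqrt_eq_rpow, ofReal_cpow (div_pos ha Real.pi_pos).le]
    norm_num
  rw [tsum_congr hlhs, jacobi, tsum_congr hrhs, hroot, ← ofReal_tsum, periodizedGaussian,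
    Real.sqrt_div' _ ha.le, Real.sqrt_div' _ Real.pi_pos.le]
  push_cast
  field_simp

theorem hasDerivAt_heatSawtooth {a : ℝ} (ha : 0 < a) (u : ℝ) :
    HasDerivAt (heatSawtooth a) ((periodizedGaussian a u - 1 : ℝ) : ℂ) u := by
  have hbound (k : ℤ) (y : ℝ) :
      ‖if k = 0 then 0 else heatThetaTerm a y k‖ ≤ Real.exp (-(a * k ^ 2)) := by
    split_ifs
    · simpa using (Real.exp_pos _).le
    · exact (norm_heatThetaTerm a y k).le
  have hθ : Summable (heatThetaTerm a u) :=
    .of_norm (by simpa only [norm_heatThetaTerm] using summable_exp_neg_mul_int_sq ha)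
  have hderiv := hasDerivAt_tsum (summable_exp_neg_mul_int_sq ha)
    (fun k y => hasDerivAt_sawtoothTerm a y k) hbound (summable_norm_sawtoothTerm ha 0).of_norm u
  rwa [ofReal_sub, ← tsum_heatThetaTerm ha, hθ.tsum_eq_add_tsum_ite 0, heatThetaTerm_zero,
    ofReal_one, add_sub_cancel_left]

theorem heatSawtooth_periodic (a : ℝ) : Function.Periodic (heatSawtooth a) 1 := fun u =>
  tsum_congr (sawtoothTerm_add_one a u)

theorem heatSawtooth_neg (a u : ℝ) : heatSawtooth a (-u) = -heatSawtooth a u := by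
  rw [heatSawtooth, ← (Equiv.neg ℤ).tsum_eq, heatSawtooth, ← tsum_neg]
  exact tsum_congr fun k => sawtoothTerm_neg_neg a u k

theorem heatSawtooth_zero (a : ℝ) : heatSawtooth a 0 = 0 := by
  have h := heatSawtooth_neg a 0
  rw [neg_zero] at h
  exact self_eq_neg.mp h

theorem im_heatSawtooth {a : ℝ} (ha : 0 < a) (u : ℝ) : (heatSawtooth a u).im = 0 := by
  have hderiv (v : ℝ) : HasDerivAt (fun v => (heatSawtooth a v).im) 0 v := by
    have h := imCLM.hasFDerivAt.comp_hasDerivAt v (hasDerivAt_heatSawtooth ha v)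
    rw [imCLM_apply, ofReal_im] at h
    exact h
  rw [is_const_of_deriv_eq_zero (fun v => (hderiv v).differentiableAt) (fun v => (hderiv v).deriv)
    u 0, heatSawtooth_zero, zero_im]

theorem monotone_re_heatSawtooth_add {a : ℝ} (ha : 0 < a) :
    Monotone fun u => (heatSawtooth a u).re + u := by
  refine monotone_of_hasDerivAt_nonneg (f' := periodizedGaussian a) (fun u => ?_) fun u => ?_
  · have h := reCLM.hasFDerivAt.comp_hasDerivAt u (hasDerivAt_heatSawtooth ha u)
    rw [reCLM_apply, ofReal_re] at h
    have h' := h.add (hasDerivAt_id u)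
    rwa [sub_add_cancel] at h'
  · exact mul_nonneg (Real.sqrt_nonneg _) (tsum_nonneg fun _ => (Real.exp_pos _).le)

theorem norm_heatSawtooth_le_one {a : ℝ} (ha : 0 < a) (u : ℝ) : ‖heatSawtooth a u‖ ≤ 1 := by
  obtain ⟨v, ⟨hv0, hv1⟩, hv⟩ := (heatSawtooth_periodic a).exists_mem_Ico₀ one_pos u
  have lower := monotone_re_heatSawtooth_add ha hv0
  have upper := monotone_re_heatSawtooth_add ha hv1.le
  simp only [heatSawtooth_zero, (heatSawtooth_periodic a).eq, zero_re] at lower upper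
  rw [hv, ← abs_re_eq_norm.2 (im_heatSawtooth ha v), abs_le]
  constructor <;> linarith

theorem kernTerm_eq_sawtoothTerm (P d t x : ℝ) :
    kernTerm P d t x = sawtoothTerm (d * (2 * π / P) ^ 2 * t) (x / P) := by
  funext k
  simp only [kernTerm, sawtoothTerm, heatThetaTerm]
  split_ifs
  · rfl
  · push_cast
    ring_nf

/-- Uniform-in-period, uniform-in-time `L^∞` bound on the periodic error-function kernel:
the series converges absolutely and its sum is bounded by an absolute constant `C`. -/
theorem uniform_kernel_bound :
    ∃ C : ℝ, 0 < C ∧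
      ∀ P : ℝ, 0 < P → ∀ d : ℝ, 0 < d → ∀ t : ℝ, 0 < t → ∀ x : ℝ,
        Summable (fun k : ℤ => ‖kernTerm P d t x k‖) ∧
          ‖∑' k : ℤ, kernTerm P d t x k‖ ≤ C := by
  refine ⟨1, one_pos, fun P hP d hd t ht x => ?_⟩
  have ha : 0 < d * (2 * π / P) ^ 2 * t := by positivity
  rw [kernTerm_eq_sawtoothTerm]
  exact ⟨summable_norm_sawtoothTerm ha _, norm_heatSawtooth_le_one ha _⟩
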